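/- The relation on row-strict composition tableaux of a fixed shape β defined recursively by: Ω < Υ if (m̄, j_Ω) is a Springer inversion of Υ when j_Υ ≠ j_Ω, and Ω < Υ if η(Ω) < η(Υ) when j_Υ = j_Ω (where η removes the box containing the minimal entry), is a strict total order on the set of row-strict composition tableaux of shape β. -/
import Mathlib


open Finset

/-- The content interval `[n-m+1, n]` of a shifted tableau. -/
def content (n m : ℕ) : Finset ℕ := Finset.Icc (n - m + 1) n

lemma content_mono (n m : ℕ) : content n (m - 1) ⊆ content n m := by
  intro x hx
  simp only [content, Finset.mem_Icc] at *
  omega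

/-- A (shifted) row-strict composition tableau of shape `β` (a weak composition of `m` with
`k` parts) and content `[n-m+1, n]`, encoded by the assignment of each entry to its row.
(The filling of each row is determined by its set of entries, since entries strictly decrease
from left to right in each row.) -/
abbrev RSCT (n m k : ℕ) (β : Fin k → ℕ) : Type :=
  {row : {i : ℕ // i ∈ content n m} → Fin k //
    ∀ j : Fin k, (Finset.univ.filter fun i => row i = j).card = β j}

/-- The (0-indexed) column of entry `i`: the number of larger entries in its own row. -/
def colOf {n m k : ℕ} {β : Fin k → ℕ} (T : RSCT n m k β)
    (i : {a : ℕ // a ∈ content n m}) : ℕ :=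
  (Finset.univ.filter fun i' : {a : ℕ // a ∈ content n m} =>
    T.val i' = T.val i ∧ (i : ℕ) < (i' : ℕ)).card

/-- `(i, j)` is a Springer inversion of `T`: there is an entry `i' > i` in row `j` that is
either directly above `i` in the same column, or in a column strictly to the right of the
column of `i`. -/
def isInv {n m k : ℕ} {β : Fin k → ℕ} (T : RSCT n m k β) (i : ℕ) (j : Fin k) : Prop :=
  ∃ (hi : i ∈ content n m) (i' : {a : ℕ // a ∈ content n m}),
    T.val i' = j ∧ i < (i' : ℕ) ∧
      (colOf T ⟨i, hi⟩ < colOf T i' ∨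
        (colOf T i' = colOf T ⟨i, hi⟩ ∧ j < T.val ⟨i, hi⟩))

/-- The finite set of Springer inversions of `T`. -/
noncomputable def InvF {n m k : ℕ} {β : Fin k → ℕ} (T : RSCT n m k β) :
    Finset (ℕ × Fin k) :=
  @Finset.filter (ℕ × Fin k) (fun p => isInv T p.1 p.2) (Classical.decPred _)
    ((content n m) ×ˢ (Finset.univ : Finset (Fin k)))

/-- The inversion vector of `T`: `invVec T i` is the number of Springer inversions of `T`
with first coordinate `i`. -/
noncomputable def invVec {n m k : ℕ} {β : Fin k → ℕ} (T : RSCT n m k β) (i : ℕ) : ℕ :=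
  ((InvF T).filter fun p => p.1 = i).card

/-- `etaRel T T'` expresses that `T'` is obtained from `T` by removing the box containing
the minimal entry `n - m + 1` (which lies at the end of its row). -/
def etaRel {n m k : ℕ} {β β' : Fin k → ℕ} (T : RSCT n m k β)
    (T' : RSCT n (m - 1) k β') : Prop :=
  (∃ h : n - m + 1 ∈ content n m,
      β' = Function.update β (T.val ⟨n - m + 1, h⟩) (β (T.val ⟨n - m + 1, h⟩) - 1)) ∧
  ∀ (i : ℕ) (hi : i ∈ content n (m - 1)),
      T'.val ⟨i, hi⟩ = T.val ⟨i, content_mono n m hi⟩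
/-- The specification of the recursive total order on row-strict composition tableaux:
if the minimal entries lie in different rows, compare via Springer inversions; if they lie
in the same row, compare the tableaux obtained by removing the minimal entry; the relation
is empty on empty tableaux. -/
def OrderSpec (n k : ℕ)
    (R : ∀ (m : ℕ) (β : Fin k → ℕ), RSCT n m k β → RSCT n m k β → Prop) : Prop :=
  (∀ (β : Fin k → ℕ) (T T' : RSCT n 0 k β), ¬ R 0 β T T') ∧
  (∀ (m : ℕ) (β : Fin k → ℕ) (Υ Ω : RSCT n m k β) (h : n - m + 1 ∈ content n m),
      Υ.val ⟨n - m + 1, h⟩ ≠ Ω.val ⟨n - m + 1, h⟩ →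
      (R m β Ω Υ ↔ isInv Υ (n - m + 1) (Ω.val ⟨n - m + 1, h⟩))) ∧
  (∀ (m : ℕ) (β : Fin k → ℕ) (Υ Ω : RSCT n m k β) (h : n - m + 1 ∈ content n m),
      Υ.val ⟨n - m + 1, h⟩ = Ω.val ⟨n - m + 1, h⟩ →
      ∀ (β' : Fin k → ℕ) (Υ' Ω' : RSCT n (m - 1) k β'),
        etaRel Υ Υ' → etaRel Ω Ω' → (R m β Ω Υ ↔ R (m - 1) β' Ω' Υ'))

/-- The equivariant Springer monomial `P_Υ(z, x) = ∏_{(i,j) ∈ Inv(Υ)} (x_i − z_j)`,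
with `x`-variables indexed by `Sum.inl` and `z`-variables by `Sum.inr`. -/
noncomputable def Ppoly {n m k : ℕ} {β : Fin k → ℕ} (T : RSCT n m k β) :
    MvPolynomial (ℕ ⊕ Fin k) ℂ :=
  ∏ p ∈ InvF T, (MvPolynomial.X (Sum.inl p.1) - MvPolynomial.X (Sum.inr p.2))

/-- The localization map `φ_{w_Ω}`, substituting `x_i ↦ z_{r(i,Ω)}` where `r(i,Ω)` is the
row of `Ω` containing `i`, and fixing the `z`-variables. -/
noncomputable def loc {n m k : ℕ} {β : Fin k → ℕ} (Ω : RSCT n m k β) :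
    MvPolynomial (ℕ ⊕ Fin k) ℂ →ₐ[ℂ] MvPolynomial (Fin k) ℂ :=
  MvPolynomial.aeval fun v => match v with
    | Sum.inl i => if h : i ∈ content n m then MvPolynomial.X (Ω.val ⟨i, h⟩) else 0
    | Sum.inr j => MvPolynomial.X j

/-- Evaluation of all `z`-variables at `0`. -/
noncomputable def evz (k : ℕ) : MvPolynomial (ℕ ⊕ Fin k) ℂ →ₐ[ℂ] MvPolynomial ℕ ℂ :=
  MvPolynomial.aeval fun v => match v with
    | Sum.inl i => MvPolynomial.X i
    | Sum.inr _ => 0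

/-- The Lehmer code of a permutation: `pcode w k = #{j > k : w j < w k}`. -/
def pcode {n : ℕ} (w : Equiv.Perm (Fin n)) (i : Fin n) : ℕ :=
  (Finset.univ.filter fun j => i < j ∧ w j < w i).card

/-- The Coxeter length of a permutation: its number of inversions. -/
def plen {n : ℕ} (w : Equiv.Perm (Fin n)) : ℕ :=
  (Finset.univ.filter fun p : Fin n × Fin n => p.1 < p.2 ∧ w p.2 < w p.1).card

section helpers
variable {n m k : ℕ} {β : Fin k → ℕ}

lemma mem_content_iff {x : ℕ} : x ∈ content n m ↔ n - m + 1 ≤ x ∧ x ≤ n := by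
  simp [content, Finset.mem_Icc]

lemma row_card (T : RSCT n m k β) (j : Fin k) :
    (Finset.univ.filter fun i : {a : ℕ // a ∈ content n m} => T.val i = j).card = β j := T.2 j

lemma colOf_lt (T : RSCT n m k β) (i' : {a : ℕ // a ∈ content n m}) :
    colOf T i' < β (T.val i') := by
  rw [← row_card T (T.val i')]
  apply Finset.card_lt_card
  rw [Finset.ssubset_iff_of_subset]
  · exact ⟨i', Finset.mem_filter.mpr ⟨Finset.mem_univ _, rfl⟩, by
      simp [colOf, Finset.mem_filter]⟩
  · intro x hx
    simp only [colOf, Finset.mem_filter] at *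
    exact ⟨hx.1, hx.2.1⟩

lemma colOf_anti (T : RSCT n m k β) {a b : {x : ℕ // x ∈ content n m}}
    (hab : (a : ℕ) < (b : ℕ)) (hrow : T.val a = T.val b) : colOf T b < colOf T a := by
  apply Finset.card_lt_card
  rw [Finset.ssubset_iff_of_subset]
  · refine ⟨b, Finset.mem_filter.mpr ⟨Finset.mem_univ _, hrow.symm, hab⟩, ?_⟩
    simp [Finset.mem_filter]
  · intro x hx
    simp only [Finset.mem_filter] at *
    exact ⟨hx.1, hrow ▸ hx.2.1, hab.trans hx.2.2⟩

lemma exists_colOf (T : RSCT n m k β) (j : Fin k) {c : ℕ} (hc : c < β j) :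
    ∃ i', T.val i' = j ∧ colOf T i' = c := by
  have hsurj := Finset.surj_on_of_inj_on_of_card_le
    (s := Finset.univ.filter fun x : {a : ℕ // a ∈ content n m} => T.val x = j)
    (t := Finset.range (β j)) (f := fun a _ => colOf T a)
    (fun a ha => by
      rw [Finset.mem_range]
      have := colOf_lt T a
      rwa [(Finset.mem_filter.mp ha).2] at this)
    (fun a b ha hb hfab => by
      rcases lt_trichotomy (a : ℕ) (b : ℕ) with h | h | h
      · exact absurd hfab (ne_of_gt (colOf_anti T h
          (((Finset.mem_filter.mp ha).2).trans ((Finset.mem_filter.mp hb).2).symm)))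
      · exact Subtype.ext h
      · exact absurd hfab.symm (ne_of_gt (colOf_anti T h
          (((Finset.mem_filter.mp hb).2).trans ((Finset.mem_filter.mp ha).2).symm))))
    (by rw [Finset.card_range, row_card])
    c (Finset.mem_range.mpr hc)
  obtain ⟨a, ha, hca⟩ := hsurj
  exact ⟨a, (Finset.mem_filter.mp ha).2, hca.symm⟩

lemma one_le_beta (T : RSCT n m k β) (h : n - m + 1 ∈ content n m) :
    1 ≤ β (T.val ⟨n - m + 1, h⟩) := by
  rw [← row_card T (T.val ⟨n - m + 1, h⟩)]
  exact Finset.card_pos.mpr ⟨⟨n - m + 1, h⟩, Finset.mem_filter.mpr ⟨Finset.mem_univ _, rfl⟩⟩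

lemma colOf_min (T : RSCT n m k β) (h : n - m + 1 ∈ content n m) :
    colOf T ⟨n - m + 1, h⟩ = β (T.val ⟨n - m + 1, h⟩) - 1 := by
  have key : (Finset.univ.filter fun i' : {a : ℕ // a ∈ content n m} =>
      T.val i' = T.val ⟨n - m + 1, h⟩ ∧ (n - m + 1 : ℕ) < (i' : ℕ)) =
      (Finset.univ.filter fun i' : {a : ℕ // a ∈ content n m} =>
      T.val i' = T.val ⟨n - m + 1, h⟩).erase ⟨n - m + 1, h⟩ := by
    ext x
    simp only [Finset.mem_filter, Finset.mem_erase, Finset.mem_univ, true_and]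
    constructor
    · rintro ⟨h1, h2⟩
      refine ⟨fun hx => ?_, h1⟩
      have hx' : (x : ℕ) = n - m + 1 := congrArg Subtype.val hx
      omega
    · rintro ⟨h1, h2⟩
      refine ⟨h2, ?_⟩
      have hge := (mem_content_iff.mp x.2).1
      have : (x : ℕ) ≠ n - m + 1 := fun hv => h1 (Subtype.ext hv)
      omega
  have hmem : (⟨n - m + 1, h⟩ : {a : ℕ // a ∈ content n m}) ∈
      Finset.univ.filter (fun i' : {a : ℕ // a ∈ content n m} =>
        T.val i' = T.val ⟨n - m + 1, h⟩) :=
    Finset.mem_filter.mpr ⟨Finset.mem_univ _, rfl⟩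
  rw [colOf, key, Finset.card_erase_of_mem hmem, row_card]

lemma isInv_iff (T : RSCT n m k β) (h : n - m + 1 ∈ content n m) (j : Fin k)
    (hj : j ≠ T.val ⟨n - m + 1, h⟩) :
    isInv T (n - m + 1) j ↔
      (β (T.val ⟨n - m + 1, h⟩) < β j ∨
        (β (T.val ⟨n - m + 1, h⟩) = β j ∧ j < T.val ⟨n - m + 1, h⟩)) := by
  have h1 : 1 ≤ β (T.val ⟨n - m + 1, h⟩) := one_le_beta T h
  constructor
  · rintro ⟨hi, i', hrow, hlt, hcase⟩
    have hcol : colOf T ⟨n - m + 1, hi⟩ = β (T.val ⟨n - m + 1, h⟩) - 1 := colOf_min T hi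
    have hlt' : colOf T i' < β j := hrow ▸ colOf_lt T i'
    rcases hcase with hc | ⟨hc, hjlt⟩
    · left; omega
    · have : β (T.val ⟨n - m + 1, h⟩) ≤ β j := by omega
      rcases this.lt_or_eq with h' | h'
      · exact Or.inl h'
      · exact Or.inr ⟨h', hjlt⟩
  · intro hor
    have hblt : β (T.val ⟨n - m + 1, h⟩) - 1 < β j := by
      rcases hor with h' | ⟨h', _⟩ <;> omega
    have hne0 : ∀ i' : {a : ℕ // a ∈ content n m}, T.val i' = j → (n - m + 1 : ℕ) < (i' : ℕ) := by
      intro i' hrow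
      have hge := (mem_content_iff.mp i'.2).1
      have : (i' : ℕ) ≠ n - m + 1 := by
        intro hv
        apply hj
        rw [← hrow]
        have hv' : i' = ⟨n - m + 1, h⟩ := Subtype.ext hv
        rw [hv']
      omega
    rcases hor with h' | ⟨h', hjlt⟩
    · obtain ⟨i', hrow, hcol⟩ := exists_colOf T j (c := β (T.val ⟨n - m + 1, h⟩)) h'
      exact ⟨h, i', hrow, hne0 i' hrow, Or.inl (by rw [hcol, colOf_min T h]; omega)⟩
    · obtain ⟨i', hrow, hcol⟩ := exists_colOf T j (c := β (T.val ⟨n - m + 1, h⟩) - 1) hblt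
      exact ⟨h, i', hrow, hne0 i' hrow, Or.inr ⟨by rw [hcol, colOf_min T h], hjlt⟩⟩

end helpers

section eta
variable {n m k : ℕ} {β : Fin k → ℕ}

lemma eta_exists (hm : 1 ≤ m) (hmn : m ≤ n) (T : RSCT n m k β)
    (h : n - m + 1 ∈ content n m) (β' : Fin k → ℕ)
    (hβ' : β' = Function.update β (T.val ⟨n - m + 1, h⟩) (β (T.val ⟨n - m + 1, h⟩) - 1)) :
    ∃ T' : RSCT n (m - 1) k β', etaRel T T' := by
  set jT := T.val ⟨n - m + 1, h⟩ with hjT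
  have hmem' : ∀ {x : ℕ}, x ∈ content n (m - 1) ↔ n - m + 2 ≤ x ∧ x ≤ n := by
    intro x
    rw [mem_content_iff]
    omega
  have hcard : ∀ j : Fin k,
      (Finset.univ.filter fun i : {a : ℕ // a ∈ content n (m - 1)} =>
        T.val ⟨i.1, content_mono n m i.2⟩ = j).card = β' j := by
    intro j
    by_cases hj : j = jT
    · subst hj
      have hmem : (⟨n - m + 1, h⟩ : {a : ℕ // a ∈ content n m}) ∈
          Finset.univ.filter (fun i : {a : ℕ // a ∈ content n m} => T.val i = jT) :=
        Finset.mem_filter.mpr ⟨Finset.mem_univ _, rfl⟩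
      have := Finset.card_bij'
        (s := Finset.univ.filter fun i : {a : ℕ // a ∈ content n (m - 1)} =>
          T.val ⟨i.1, content_mono n m i.2⟩ = jT)
        (t := (Finset.univ.filter fun i : {a : ℕ // a ∈ content n m} =>
          T.val i = jT).erase ⟨n - m + 1, h⟩)
        (i := fun a _ => ⟨a.1, content_mono n m a.2⟩)
        (j := fun b hb => ⟨b.1, by
          have h1 : b ≠ ⟨n - m + 1, h⟩ := (Finset.mem_erase.mp hb).1
          have h2 : (b : ℕ) ≠ n - m + 1 := fun hv => h1 (Subtype.ext hv)
          have h3 := (mem_content_iff.mp b.2).1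
          have h4 := (mem_content_iff.mp b.2).2
          exact hmem'.mpr (by omega)⟩)
        ?_ ?_ ?_ ?_
      · rw [this, Finset.card_erase_of_mem hmem, row_card, hβ', Function.update_self]
      · intro a ha
        rw [Finset.mem_erase]
        constructor
        · intro hv
          have := congrArg Subtype.val hv
          have h3 := (hmem'.mp a.2).1
          simp only at this
          omega
        · rw [Finset.mem_filter]
          exact ⟨Finset.mem_univ _, (Finset.mem_filter.mp ha).2⟩
      · intro b hb
        rw [Finset.mem_filter]
        exact ⟨Finset.mem_univ _, (Finset.mem_filter.mp (Finset.mem_erase.mp hb).2).2⟩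
      · intro a _; exact Subtype.ext rfl
      · intro b _; exact Subtype.ext rfl
    · have := Finset.card_bij'
        (s := Finset.univ.filter fun i : {a : ℕ // a ∈ content n (m - 1)} =>
          T.val ⟨i.1, content_mono n m i.2⟩ = j)
        (t := Finset.univ.filter fun i : {a : ℕ // a ∈ content n m} => T.val i = j)
        (i := fun a _ => ⟨a.1, content_mono n m a.2⟩)
        (j := fun b hb => ⟨b.1, by
          have hrow : T.val b = j := (Finset.mem_filter.mp hb).2
          have h2 : (b : ℕ) ≠ n - m + 1 := by
            intro hv
            apply hj
            have hv' : b = ⟨n - m + 1, h⟩ := Subtype.ext hv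
            rw [← hrow, hjT, hv']
          have h3 := (mem_content_iff.mp b.2).1
          have h4 := (mem_content_iff.mp b.2).2
          exact hmem'.mpr (by omega)⟩)
        ?_ ?_ ?_ ?_
      · rw [this, row_card, hβ', Function.update_of_ne hj]
      · intro a ha
        rw [Finset.mem_filter]
        exact ⟨Finset.mem_univ _, (Finset.mem_filter.mp ha).2⟩
      · intro b hb
        rw [Finset.mem_filter]
        exact ⟨Finset.mem_univ _, (Finset.mem_filter.mp hb).2⟩
      · intro a _; exact Subtype.ext rfl
      · intro b _; exact Subtype.ext rfl
  exact ⟨⟨fun i => T.val ⟨i.1, content_mono n m i.2⟩, hcard⟩, ⟨h, hβ'⟩, fun i hi => rfl⟩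

lemma beta_le_sum (j : Fin k) : β j ≤ ∑ j', β j' :=
  Finset.single_le_sum (fun _ _ => Nat.zero_le _) (Finset.mem_univ j)

lemma sum_update (hsum : ∑ j', β j' = m) (j : Fin k) (hb : 1 ≤ β j) :
    ∑ j', Function.update β j (β j - 1) j' = m - 1 := by
  rw [Finset.sum_update_of_mem (Finset.mem_univ j)]
  have h1 : ∑ x ∈ Finset.univ \ {j}, β x = m - β j := by
    have := Finset.sum_eq_sum_sdiff_singleton_add (Finset.mem_univ j) β
    omega
  have h2 : β j ≤ m := hsum ▸ beta_le_sum j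
  omega

end eta

/-- Any family of relations on row-strict composition tableaux satisfying
the recursive specification (`Ω < Υ` iff `(m̄, j_Ω)` is a Springer inversion of `Υ` when
`j_Υ ≠ j_Ω`, and `Ω < Υ` iff `η(Ω) < η(Υ)` when `j_Υ = j_Ω`, where `η` removes the box
containing the minimal entry) is a strict total order on `RSCT_n(β)`: irreflexive,
transitive, and trichotomous. -/
theorem stmt2 (n k : ℕ)
    (R : ∀ (m : ℕ) (β : Fin k → ℕ), RSCT n m k β → RSCT n m k β → Prop)
    (hR : OrderSpec n k R) (m : ℕ) (β : Fin k → ℕ) (hmn : m ≤ n)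
    (hsum : ∑ j, β j = m) :
    (∀ T : RSCT n m k β, ¬ R m β T T) ∧
    (∀ T₁ T₂ T₃ : RSCT n m k β, R m β T₁ T₂ → R m β T₂ T₃ → R m β T₁ T₃) ∧
    (∀ T₁ T₂ : RSCT n m k β, T₁ ≠ T₂ → R m β T₁ T₂ ∨ R m β T₂ T₁) := by
  induction m generalizing β with
  | zero =>
    refine ⟨fun T => hR.1 β T T, fun T₁ T₂ T₃ h12 _ => absurd h12 (hR.1 β T₁ T₂), ?_⟩
    intro T₁ T₂ hne
    exfalso
    apply hne
    apply Subtype.ext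
    funext i
    exact absurd (mem_content_iff.mp i.2) (by omega)
  | succ m IH =>
    have hm1 : 1 ≤ m + 1 := by omega
    have h : n - (m + 1) + 1 ∈ content n (m + 1) := mem_content_iff.mpr (by omega)
    have hmn' : m ≤ n := by omega
    have hb : ∀ T : RSCT n (m + 1) k β, 1 ≤ β (T.val ⟨n - (m + 1) + 1, h⟩) :=
      fun T => one_le_beta T h
    -- characterization when minimal entries in different rows
    have rchar : ∀ Υ Ω : RSCT n (m + 1) k β,
        Υ.val ⟨n - (m + 1) + 1, h⟩ ≠ Ω.val ⟨n - (m + 1) + 1, h⟩ →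
        (R (m + 1) β Ω Υ ↔
          (β (Υ.val ⟨n - (m + 1) + 1, h⟩) < β (Ω.val ⟨n - (m + 1) + 1, h⟩) ∨
            (β (Υ.val ⟨n - (m + 1) + 1, h⟩) = β (Ω.val ⟨n - (m + 1) + 1, h⟩) ∧
              Ω.val ⟨n - (m + 1) + 1, h⟩ < Υ.val ⟨n - (m + 1) + 1, h⟩))) := by
      intro Υ Ω hne
      exact (hR.2.1 (m + 1) β Υ Ω h hne).trans (isInv_iff Υ h _ (Ne.symm hne))
    refine ⟨?_, ?_, ?_⟩
    · -- irreflexivity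
      intro T hRT
      obtain ⟨T', hT'⟩ := eta_exists hm1 hmn T h _ rfl
      have hred := (hR.2.2 (m + 1) β T T h rfl _ T' T' hT' hT').mp hRT
      exact (IH _ hmn' (sum_update hsum _ (hb T))).1 T' hred
    · -- transitivity
      intro T₁ T₂ T₃ h12 h23
      by_cases e12 : T₁.val ⟨n - (m + 1) + 1, h⟩ = T₂.val ⟨n - (m + 1) + 1, h⟩ <;>
        by_cases e23 : T₂.val ⟨n - (m + 1) + 1, h⟩ = T₃.val ⟨n - (m + 1) + 1, h⟩
      · -- all minimal rows equal
        have e13 := e12.trans e23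
        obtain ⟨η₁, hη₁⟩ := eta_exists hm1 hmn T₁ h _ rfl
        obtain ⟨η₂, hη₂⟩ := eta_exists hm1 hmn T₂ h _ (by rw [← e12])
        obtain ⟨η₃, hη₃⟩ := eta_exists hm1 hmn T₃ h _ (by rw [← e13])
        have r12 := (hR.2.2 (m + 1) β T₂ T₁ h e12.symm _ η₂ η₁ hη₂ hη₁).mp h12
        have r23 := (hR.2.2 (m + 1) β T₃ T₂ h e23.symm _ η₃ η₂ hη₃ hη₂).mp h23
        have r13 := (IH _ hmn' (sum_update hsum _ (hb T₁))).2.1 η₁ η₂ η₃ r12 r23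
        exact (hR.2.2 (m + 1) β T₃ T₁ h e13.symm _ η₃ η₁ hη₃ hη₁).mpr r13
      · -- rows of T1,T2 equal, T2,T3 differ
        have L23 := (rchar T₃ T₂ (Ne.symm e23)).mp h23
        rw [← e12] at L23
        have e13 : T₁.val ⟨n - (m + 1) + 1, h⟩ ≠ T₃.val ⟨n - (m + 1) + 1, h⟩ :=
          e12 ▸ e23
        exact (rchar T₃ T₁ (Ne.symm e13)).mpr L23
      · -- rows of T2,T3 equal, T1,T2 differ
        have L12 := (rchar T₂ T₁ (Ne.symm e12)).mp h12
        rw [e23] at L12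
        have e13 : T₁.val ⟨n - (m + 1) + 1, h⟩ ≠ T₃.val ⟨n - (m + 1) + 1, h⟩ :=
          fun hv => e12 (hv.trans e23.symm)
        exact (rchar T₃ T₁ (Ne.symm e13)).mpr L12
      · -- both differ
        have L12 := (rchar T₂ T₁ (Ne.symm e12)).mp h12
        have L23 := (rchar T₃ T₂ (Ne.symm e23)).mp h23
        have L13 : β (T₃.val ⟨n - (m + 1) + 1, h⟩) < β (T₁.val ⟨n - (m + 1) + 1, h⟩) ∨
            (β (T₃.val ⟨n - (m + 1) + 1, h⟩) = β (T₁.val ⟨n - (m + 1) + 1, h⟩) ∧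
              T₁.val ⟨n - (m + 1) + 1, h⟩ < T₃.val ⟨n - (m + 1) + 1, h⟩) := by
          rcases L12 with a | ⟨a, b⟩ <;> rcases L23 with c | ⟨c, d⟩
          · exact Or.inl (c.trans a)
          · exact Or.inl (c ▸ a)
          · exact Or.inl (a ▸ c)
          · exact Or.inr ⟨c.trans a, b.trans d⟩
        have e13 : T₃.val ⟨n - (m + 1) + 1, h⟩ ≠ T₁.val ⟨n - (m + 1) + 1, h⟩ := by
          intro e
          rcases L13 with a | ⟨_, b⟩
          · rw [e] at a; exact lt_irrefl _ a
          · rw [← e] at b; exact lt_irrefl _ b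
        exact (rchar T₃ T₁ e13).mpr L13
    · -- trichotomy
      intro T₁ T₂ hne
      by_cases e12 : T₁.val ⟨n - (m + 1) + 1, h⟩ = T₂.val ⟨n - (m + 1) + 1, h⟩
      · obtain ⟨η₁, hη₁⟩ := eta_exists hm1 hmn T₁ h _ rfl
        obtain ⟨η₂, hη₂⟩ := eta_exists hm1 hmn T₂ h _ (by rw [← e12])
        have hηne : η₁ ≠ η₂ := by
          intro e
          apply hne
          apply Subtype.ext
          funext i
          by_cases hi : (i : ℕ) = n - (m + 1) + 1
          · have : i = ⟨n - (m + 1) + 1, h⟩ := Subtype.ext hi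
            rw [this]
            exact e12
          · have hi' : (i : ℕ) ∈ content n m := by
              have := mem_content_iff.mp i.2
              exact mem_content_iff.mpr (by omega)
            have e1 := hη₁.2 i.1 hi'
            have e2 := hη₂.2 i.1 hi'
            rw [e] at e1
            exact (e1.symm.trans e2 : T₁.val _ = T₂.val _)
        rcases (IH _ hmn' (sum_update hsum _ (hb T₁))).2.2 η₁ η₂ hηne with r | r
        · exact Or.inl ((hR.2.2 (m + 1) β T₂ T₁ h e12.symm _ η₂ η₁ hη₂ hη₁).mpr r)
        · exact Or.inr ((hR.2.2 (m + 1) β T₁ T₂ h e12 _ η₁ η₂ hη₁ hη₂).mpr r)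
      · rcases lt_trichotomy (β (T₁.val ⟨n - (m + 1) + 1, h⟩))
          (β (T₂.val ⟨n - (m + 1) + 1, h⟩)) with a | a | a
        · exact Or.inr ((rchar T₁ T₂ e12).mpr (Or.inl a))
        · rcases lt_or_gt_of_ne e12 with b | b
          · exact Or.inl ((rchar T₂ T₁ (Ne.symm e12)).mpr (Or.inr ⟨a.symm, b⟩))
          · exact Or.inr ((rchar T₁ T₂ e12).mpr (Or.inr ⟨a, b⟩))
        · exact Or.inl ((rchar T₂ T₁ (Ne.symm e12)).mpr (Or.inl a))
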